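/- Let F be a field with char(F) ≠ 2. None of the following algebras on F³ satisfies the Jacobi identity (so none is a Lie algebra): A₁ with e₁·e₂ = e₂, e₂·e₃ = e₃; A₂(λ) with e₁·e₂ = e₂, e₁·e₃ = e₁ + λe₂, e₂·e₃ = e₃ (for any λ ∈ F); A₃ with e₁·e₂ = e₂, e₁·e₃ = e₂, e₂·e₃ = e₃ (other basis products zero or determined by anti-commutativity). -/
import Mathlib

def mulA1 {F : Type*} [Field F] (x y : Fin 3 → F) : Fin 3 → F :=
  ![0,
    (x 0 * y 1 - x 1 * y 0),
    (x 1 * y 2 - x 2 * y 1)]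

def mulA2 {F : Type*} [Field F] (l : F) (x y : Fin 3 → F) : Fin 3 → F :=
  ![(x 0 * y 2 - x 2 * y 0),
    (x 0 * y 1 - x 1 * y 0) + l * (x 0 * y 2 - x 2 * y 0),
    (x 1 * y 2 - x 2 * y 1)]

def mulA3 {F : Type*} [Field F] (x y : Fin 3 → F) : Fin 3 → F :=
  ![0,
    (x 0 * y 1 - x 1 * y 0) + (x 0 * y 2 - x 2 * y 0),
    (x 1 * y 2 - x 2 * y 1)]

theorem A1_A2_A3_not_lie
    (F : Type*) [Field F] (hchar : ringChar F ≠ 2) :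
    (¬ ∀ x y z : Fin 3 → F,
      mulA1 (mulA1 x y) z + mulA1 (mulA1 y z) x + mulA1 (mulA1 z x) y = 0) ∧
    (∀ l : F, ¬ ∀ x y z : Fin 3 → F,
      mulA2 l (mulA2 l x y) z + mulA2 l (mulA2 l y z) x + mulA2 l (mulA2 l z x) y = 0) ∧
    (¬ ∀ x y z : Fin 3 → F,
      mulA3 (mulA3 x y) z + mulA3 (mulA3 y z) x + mulA3 (mulA3 z x) y = 0) := by
  refine ⟨?_, ?_, ?_⟩
  · intro h
    have := congrFun (h ![1,0,0] ![0,1,0] ![0,0,1]) 2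
    simp [mulA1] at this
  · intro l h
    have := congrFun (h ![1,0,0] ![0,1,0] ![0,0,1]) 2
    simp [mulA2] at this
  · intro h
    have := congrFun (h ![1,0,0] ![0,1,0] ![0,0,1]) 2
    simp [mulA3] at this
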